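/- arXiv:2107.05772 — 4 statements merged into one kernel-verified Lean document; each statement's English description precedes it below -/
import Mathlib

section
/- For any tree T with a proper 2-coloring c with color classes C1, C2 where |C1| ≥ |C2|, and any λ ≥ 2, there exists a λ-backbone coloring of the complete graph K_n (n = |V(T)|) with backbone T using colors from {1, ..., max{λ + |C1|, n}}. -/
open Finset SimpleGraph

lemma card_filter_product_eq_sum {V : Type*} [DecidableEq V] (A B : Finset V)
    (E : V → V → Prop) [DecidableRel E] :
    ((A ×ˢ B).filter fun p => E p.1 p.2).card
      = ∑ a ∈ A, (B.filter fun b => E a b).card := by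
  rw [Finset.card_filter, Finset.sum_product]
  exact Finset.sum_congr rfl fun a _ => (Finset.card_filter _ _).symm

lemma exists_rank_functions {V : Type*} [DecidableEq V] (E : V → V → Prop) [DecidableRel E] :
    ∀ n (A B : Finset V), A.card = n → A.card ≤ B.card →
    (∀ S T : Finset V, S ⊆ A → T ⊆ B → S.Nonempty →
      ((S ×ˢ T).filter fun p => E p.1 p.2).card + 1 ≤ S.card + T.card) →
    ∃ f g : V → ℕ, Set.InjOn f A ∧ Set.InjOn g B ∧
      (∀ a ∈ A, f a ∈ Finset.Icc 1 A.card) ∧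
      (∀ b ∈ B, g b ∈ Finset.Icc 1 B.card) ∧
      (∀ a ∈ A, ∀ b ∈ B, E a b → f a ≤ g b) := by
  intro n
  induction n using Nat.strong_induction_on with
  | _ n ih =>
  intro A B hn hcard hbound
  rcases Nat.eq_zero_or_pos n with hz | hpos
  · -- A is empty
    subst hz
    have hA : A = ∅ := Finset.card_eq_zero.mp hn
    subst hA
    refine ⟨fun _ => 1, fun v => if h : v ∈ B then ((B.equivFin ⟨v, h⟩ : Fin B.card) : ℕ) + 1 else 1,
      ?_, ?_, ?_, ?_, ?_⟩
    · simp [Set.InjOn]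
    · intro x hx y hy hxy
      simp only [Finset.mem_coe] at hx hy
      simp only [dif_pos hx, dif_pos hy, add_left_inj] at hxy
      have := B.equivFin.injective (Fin.val_injective (by exact_mod_cast hxy))
      simpa using congrArg Subtype.val this
    · simp
    · intro b hb
      simp only [dif_pos hb, Finset.mem_Icc]
      constructor
      · omega
      · have := (B.equivFin ⟨b, hb⟩).isLt
        omega
    · simp
  · -- A nonempty
    have hAne : A.Nonempty := Finset.card_pos.mp (hn ▸ hpos)
    set q := A.card with hq
    set p := B.card with hp
    -- find a vertex of small degree
    have hdeg : ∃ a ∈ A, (B.filter fun b => E a b).card + q ≤ p + 1 := by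
      by_contra hcon
      push_neg at hcon
      have hsum : q * (p + 2) ≤ ∑ a ∈ A, ((B.filter fun b => E a b).card + q) := by
        calc q * (p + 2) = ∑ _a ∈ A, (p + 2) := by rw [Finset.sum_const, smul_eq_mul, mul_comm]
        _ ≤ _ := Finset.sum_le_sum fun a ha => by have := hcon a ha; omega
      rw [Finset.sum_add_distrib, Finset.sum_const, smul_eq_mul] at hsum
      have hedges : (∑ a ∈ A, (B.filter fun b => E a b).card) + 1 ≤ q + p := by
        rw [← card_filter_product_eq_sum]
        exact hbound A B (subset_refl _) (subset_refl _) hAne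
      have hqp : q ≤ p := hcard
      obtain ⟨t, ht⟩ := Nat.exists_eq_add_of_le hqp
      have hq0 : 0 < q := hn ▸ hpos
      have h5 : t ≤ q * t := Nat.le_mul_of_pos_left t hq0
      have hexp : q * (p + 2) = q*q + q*t + 2*q := by rw [ht]; ring
      rw [hexp, ← hq] at hsum
      linarith
    obtain ⟨a, haA, ha⟩ := hdeg
    set N := B.filter (fun b => E a b) with hN
    have hNB : N ⊆ B := Finset.filter_subset _ _
    set d := N.card with hd
    set A' := A.erase a with hA'
    set B' := B \ N with hB'
    have hA'card : A'.card = q - 1 := Finset.card_erase_of_mem haA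
    have hB'card : B'.card = p - d := Finset.card_sdiff_of_subset hNB
    have hdp : d ≤ p := Finset.card_le_card hNB
    have hqn : q = n := hn
    have hrec := ih (q - 1) (by omega) A' B'  hA'card
      (by rw [hA'card, hB'card]; omega)
      (fun S T hS hT hSne => hbound S T (hS.trans (Finset.erase_subset _ _))
        (hT.trans (Finset.sdiff_subset)) hSne)
    obtain ⟨f', g', hf'inj, hg'inj, hf'rng, hg'rng, hfg'⟩ := hrec
    refine ⟨fun x => if x = a then q else f' x,
      fun v => if h : v ∈ N then B'.card + ((N.equivFin ⟨v, h⟩ : Fin N.card) : ℕ) + 1 else g' v,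
      ?_, ?_, ?_, ?_, ?_⟩
    · -- InjOn f
      intro x hx y hy hxy
      simp only [Finset.mem_coe] at hx hy
      beta_reduce at hxy
      by_cases hxa : x = a <;> by_cases hya : y = a
      · rw [hxa, hya]
      · exfalso
        rw [if_pos hxa, if_neg hya] at hxy
        have hy' : y ∈ A' := Finset.mem_erase.mpr ⟨hya, hy⟩
        have := hf'rng y hy'
        rw [hA'card, Finset.mem_Icc] at this
        omega
      · exfalso
        rw [if_neg hxa, if_pos hya] at hxy
        have hx' : x ∈ A' := Finset.mem_erase.mpr ⟨hxa, hx⟩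
        have := hf'rng x hx'
        rw [hA'card, Finset.mem_Icc] at this
        omega
      · rw [if_neg hxa, if_neg hya] at hxy
        exact hf'inj (Finset.mem_coe.mpr (Finset.mem_erase.mpr ⟨hxa, hx⟩))
          (Finset.mem_coe.mpr (Finset.mem_erase.mpr ⟨hya, hy⟩)) hxy
    · -- InjOn g
      intro x hx y hy hxy
      simp only [Finset.mem_coe] at hx hy
      beta_reduce at hxy
      by_cases hxN : x ∈ N <;> by_cases hyN : y ∈ N
      · rw [dif_pos hxN, dif_pos hyN] at hxy
        have : (N.equivFin ⟨x, hxN⟩ : Fin N.card) = (N.equivFin ⟨y, hyN⟩ : Fin N.card) :=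
          Fin.val_injective (by omega)
        have := N.equivFin.injective this
        simpa using congrArg Subtype.val this
      · exfalso
        rw [dif_pos hxN, dif_neg hyN] at hxy
        have hy' : y ∈ B' := Finset.mem_sdiff.mpr ⟨hy, hyN⟩
        have := hg'rng y hy'
        rw [hB'card, Finset.mem_Icc] at this
        omega
      · exfalso
        rw [dif_neg hxN, dif_pos hyN] at hxy
        have hx' : x ∈ B' := Finset.mem_sdiff.mpr ⟨hx, hxN⟩
        have := hg'rng x hx'
        rw [hB'card, Finset.mem_Icc] at this
        omega
      · rw [dif_neg hxN, dif_neg hyN] at hxy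
        exact hg'inj (Finset.mem_coe.mpr (Finset.mem_sdiff.mpr ⟨hx, hxN⟩))
          (Finset.mem_coe.mpr (Finset.mem_sdiff.mpr ⟨hy, hyN⟩)) hxy
    · -- range of f
      intro x hx
      beta_reduce
      by_cases hxa : x = a
      · rw [if_pos hxa, Finset.mem_Icc]
        omega
      · rw [if_neg hxa]
        have := hf'rng x (Finset.mem_erase.mpr ⟨hxa, hx⟩)
        rw [hA'card, Finset.mem_Icc] at this
        rw [Finset.mem_Icc]
        omega
    · -- range of g
      intro b hb
      beta_reduce
      by_cases hbN : b ∈ N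
      · rw [dif_pos hbN, Finset.mem_Icc]
        have hlt := (N.equivFin ⟨b, hbN⟩).isLt
        rw [hB'card]
        omega
      · rw [dif_neg hbN]
        have := hg'rng b (Finset.mem_sdiff.mpr ⟨hb, hbN⟩)
        rw [hB'card, Finset.mem_Icc] at this
        rw [Finset.mem_Icc]
        omega
    · -- edge constraint
      intro x hx b hb hE
      beta_reduce
      by_cases hxa : x = a
      · have hbN : b ∈ N := Finset.mem_filter.mpr ⟨hb, hxa ▸ hE⟩
        rw [if_pos hxa, dif_pos hbN, hB'card]
        omega
      · rw [if_neg hxa]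
        by_cases hbN : b ∈ N
        · rw [dif_pos hbN, hB'card]
          have := hf'rng x (Finset.mem_erase.mpr ⟨hxa, hx⟩)
          rw [hA'card, Finset.mem_Icc] at this
          omega
        · rw [dif_neg hbN]
          exact hfg' x (Finset.mem_erase.mpr ⟨hxa, hx⟩) b (Finset.mem_sdiff.mpr ⟨hb, hbN⟩) hE

section TreeLemmas

variable {V : Type*} [DecidableEq V] {G : SimpleGraph V} {C1 C2 : Finset V}

lemma walk_parity (hdisj : Disjoint C1 C2)
    (hproper : ∀ u v : V, G.Adj u v → ((u ∈ C1 ∧ v ∈ C2) ∨ (u ∈ C2 ∧ v ∈ C1))) :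
    ∀ {x y : V} (W : G.Walk x y), ((x ∈ C1) ↔ (y ∈ C1)) ↔ Even W.length := by
  intro x y W
  induction W with
  | nil => simp
  | @cons x z y h p ih =>
    have hxz : (x ∈ C1) ↔ ¬(z ∈ C1) := by
      rcases hproper _ _ h with ⟨hx1, hz2⟩ | ⟨hx2, hz1⟩
      · have := Finset.disjoint_right.mp hdisj hz2
        tauto
      · have := Finset.disjoint_right.mp hdisj hx2
        tauto
    rw [Walk.length_cons, Nat.even_add_one, ← ih]
    tauto

set_option linter.unusedSectionVars false in
lemma adj_diff_class (hdisj : Disjoint C1 C2)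
    (hproper : ∀ u v : V, G.Adj u v → ((u ∈ C1 ∧ v ∈ C2) ∨ (u ∈ C2 ∧ v ∈ C1)))
    {u v : V} (h : G.Adj u v) : (u ∈ C1) ↔ ¬(v ∈ C1) := by
  rcases hproper _ _ h with ⟨hx1, hz2⟩ | ⟨hx2, hz1⟩
  · have := Finset.disjoint_right.mp hdisj hz2
    tauto
  · have := Finset.disjoint_right.mp hdisj hx2
    tauto

lemma adj_dist_dichotomy (hG : G.IsTree) (hdisj : Disjoint C1 C2)
    (hproper : ∀ u v : V, G.Adj u v → ((u ∈ C1 ∧ v ∈ C2) ∨ (u ∈ C2 ∧ v ∈ C1)))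
    (r : V) {u v : V} (h : G.Adj u v) :
    G.dist r u + 1 = G.dist r v ∨ G.dist r v + 1 = G.dist r u := by
  obtain ⟨Wu, _, hWul⟩ := hG.isConnected.exists_path_of_dist r u
  obtain ⟨Wv, _, hWvl⟩ := hG.isConnected.exists_path_of_dist r v
  have h1 : G.dist r v ≤ G.dist r u + 1 := by
    have := SimpleGraph.dist_le (Wu.concat h)
    rwa [Walk.length_concat, hWul] at this
  have h2 : G.dist r u ≤ G.dist r v + 1 := by
    have := SimpleGraph.dist_le (Wv.concat h.symm)
    rwa [Walk.length_concat, hWvl] at this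
  have hu := walk_parity hdisj hproper Wu
  have hv := walk_parity hdisj hproper Wv
  rw [hWul] at hu
  rw [hWvl] at hv
  have huv := adj_diff_class hdisj hproper h
  have hne : G.dist r u ≠ G.dist r v := by
    intro e
    rw [e] at hu
    tauto
  omega

lemma parent_unique (hG : G.IsTree) {r v u w : V} (hu : G.Adj u v) (hw : G.Adj w v)
    (hdu : G.dist r u + 1 = G.dist r v) (hdw : G.dist r w + 1 = G.dist r v) : u = w := by
  obtain ⟨Pu, hPu, hPul⟩ := hG.isConnected.exists_path_of_dist r u
  obtain ⟨Pw, hPw, hPwl⟩ := hG.isConnected.exists_path_of_dist r w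
  have hvPu : v ∉ Pu.support := by
    intro hv
    have h1 := SimpleGraph.dist_le (Pu.takeUntil v hv)
    have h2 := Walk.length_takeUntil_le Pu hv
    omega
  have hvPw : v ∉ Pw.support := by
    intro hv
    have h1 := SimpleGraph.dist_le (Pw.takeUntil v hv)
    have h2 := Walk.length_takeUntil_le Pw hv
    omega
  have hQu : (Pu.concat hu).IsPath := by
    rw [← Walk.isPath_reverse_iff, Walk.reverse_concat, Walk.cons_isPath_iff]
    exact ⟨hPu.reverse, by rwa [Walk.support_reverse, List.mem_reverse]⟩
  have hQw : (Pw.concat hw).IsPath := by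
    rw [← Walk.isPath_reverse_iff, Walk.reverse_concat, Walk.cons_isPath_iff]
    exact ⟨hPw.reverse, by rwa [Walk.support_reverse, List.mem_reverse]⟩
  obtain ⟨P, -, huniq⟩ := hG.existsUnique_path r v
  have heq : Pu.concat hu = Pw.concat hw := by
    rw [huniq _ hQu, huniq _ hQw]
  have hs := congrArg (fun W : G.Walk r v => W.reverse.support) heq
  simp only [Walk.reverse_concat, Walk.support_cons] at hs
  rw [Pu.reverse.support_eq_cons, Pw.reverse.support_eq_cons] at hs
  exact (List.cons_eq_cons.mp (List.cons_eq_cons.mp hs).2).1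


lemma tree_edge_bound (hG : G.IsTree) (hdisj : Disjoint C1 C2)
    (hproper : ∀ u v : V, G.Adj u v → ((u ∈ C1 ∧ v ∈ C2) ∨ (u ∈ C2 ∧ v ∈ C1)))
    [DecidableRel G.Adj]
    (S T : Finset V) (hS : S ⊆ C2) (hT : T ⊆ C1) (hSne : S.Nonempty) :
    ((S ×ˢ T).filter fun p => G.Adj p.1 p.2).card + 1 ≤ S.card + T.card := by
  classical
  obtain ⟨r, hr⟩ := hSne
  set U := S ∪ T with hU
  set Φ : V × V → V := fun pq => if G.dist r pq.1 < G.dist r pq.2 then pq.2 else pq.1 with hΦ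
  have key : ∀ pq ∈ (S ×ˢ T).filter (fun p => G.Adj p.1 p.2),
      (G.Adj pq.1 pq.2 ∧ pq.1 ∈ S ∧ pq.2 ∈ T) ∧
      ((Φ pq = pq.2 ∧ G.dist r pq.1 + 1 = G.dist r (Φ pq)) ∨
       (Φ pq = pq.1 ∧ G.dist r pq.2 + 1 = G.dist r (Φ pq))) := by
    rintro ⟨a, b⟩ hpq
    rw [Finset.mem_filter, Finset.mem_product] at hpq
    obtain ⟨⟨ha, hb⟩, hadj⟩ := hpq
    dsimp only at ha hb hadj ⊢
    refine ⟨⟨hadj, ha, hb⟩, ?_⟩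
    rcases adj_dist_dichotomy hG hdisj hproper r hadj with hd | hd
    · left
      have hlt : G.dist r a < G.dist r b := by omega
      simp only [hΦ]
      rw [if_pos hlt]
      exact ⟨rfl, hd⟩
    · right
      have hlt : ¬ (G.dist r a < G.dist r b) := by omega
      simp only [hΦ]
      rw [if_neg hlt]
      exact ⟨rfl, hd⟩
  have hmaps : ∀ pq ∈ (S ×ˢ T).filter (fun p => G.Adj p.1 p.2), Φ pq ∈ U.erase r := by
    intro pq hpq
    obtain ⟨⟨hadj, ha, hb⟩, hcase⟩ := key pq hpq
    have hdpos : 0 < G.dist r (Φ pq) := by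
      rcases hcase with ⟨-, hd⟩ | ⟨-, hd⟩ <;> omega
    have hne : Φ pq ≠ r := by
      intro e
      rw [e, SimpleGraph.dist_self] at hdpos
      exact Nat.lt_irrefl 0 hdpos
    rcases hcase with ⟨he, -⟩ | ⟨he, -⟩
    · exact Finset.mem_erase.mpr ⟨hne, Finset.mem_union_right _ (he ▸ hb)⟩
    · exact Finset.mem_erase.mpr ⟨hne, Finset.mem_union_left _ (he ▸ ha)⟩
  have hinj : Set.InjOn Φ ((S ×ˢ T).filter (fun p => G.Adj p.1 p.2)) := by
    rintro pq hpq pq' hpq' heq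
    simp only [Finset.mem_coe] at hpq hpq'
    obtain ⟨⟨hadj, ha, hb⟩, hcase⟩ := key pq hpq
    obtain ⟨⟨hadj', ha', hb'⟩, hcase'⟩ := key pq' hpq'
    have hC1 : ∀ x ∈ T, x ∈ C1 := fun x hx => hT hx
    have hC2 : ∀ x ∈ S, x ∈ C2 := fun x hx => hS hx
    rcases hcase with ⟨he, hd⟩ | ⟨he, hd⟩ <;> rcases hcase' with ⟨he', hd'⟩ | ⟨he', hd'⟩
    · -- both map to second coordinate
      have h2 : pq.2 = pq'.2 := by rw [← he, ← he', heq]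
      have h1 : pq.1 = pq'.1 := by
        refine parent_unique hG (v := Φ pq) (by rw [he]; exact hadj)
          (by rw [heq, he']; exact hadj') hd (by rw [← heq] at hd'; exact hd')
      exact Prod.ext h1 h2
    · exfalso
      have hx1 : Φ pq ∈ C1 := he ▸ hC1 _ hb
      have hx2 : Φ pq ∈ C2 := heq ▸ he' ▸ hC2 _ ha'
      exact Finset.disjoint_left.mp hdisj hx1 hx2
    · exfalso
      have hx2 : Φ pq ∈ C2 := he ▸ hC2 _ ha
      have hx1 : Φ pq ∈ C1 := heq ▸ he' ▸ hC1 _ hb'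
      exact Finset.disjoint_left.mp hdisj hx1 hx2
    · -- both map to first coordinate
      have h1 : pq.1 = pq'.1 := by rw [← he, ← he', heq]
      have h2 : pq.2 = pq'.2 := by
        refine parent_unique hG (v := Φ pq) (by rw [he]; exact hadj.symm)
          (by rw [heq, he']; exact hadj'.symm) hd (by rw [← heq] at hd'; exact hd')
      exact Prod.ext h1 h2
  have hcard := Finset.card_le_card_of_injOn Φ hmaps hinj
  have hrU : r ∈ U := Finset.mem_union_left _ hr
  have h1 : (U.erase r).card = U.card - 1 := Finset.card_erase_of_mem hrU
  have h2 : U.card ≤ S.card + T.card := Finset.card_union_le S T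
  have h3 : 0 < U.card := Finset.card_pos.mpr ⟨r, hrU⟩
  omega

end TreeLemmas


/-- For any tree `T` with a proper 2-coloring with color classes `C1, C2`
where `|C1| ≥ |C2|`, and any `λ ≥ 2`, there is a λ-backbone coloring of `K_n`
(`n = |V(T)|`) with backbone `T` using colors from `{1, ..., max (λ + |C1|) n}`. -/
theorem bbc_clique_tree_direct {V : Type*} [Fintype V] [DecidableEq V]
    (T : SimpleGraph V) (hT : T.IsTree)
    (C1 C2 : Finset V) (hdisj : Disjoint C1 C2) (hcover : C1 ∪ C2 = Finset.univ)
    (hproper : ∀ u v : V, T.Adj u v →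
      ((u ∈ C1 ∧ v ∈ C2) ∨ (u ∈ C2 ∧ v ∈ C1)))
    (hsize : C2.card ≤ C1.card)
    (lam : ℕ) (hlam : 2 ≤ lam) :
    ∃ c : V → ℕ, Function.Injective c ∧
      (∀ v : V, c v ∈ Finset.Icc 1 (max (lam + C1.card) (Fintype.card V))) ∧
      (∀ u v : V, T.Adj u v → (lam : ℤ) ≤ |(c u : ℤ) - (c v : ℤ)|) := by
  classical
  set q := C2.card with hq
  set p := C1.card with hp
  have hn : Fintype.card V = p + q := by
    rw [← Finset.card_univ, ← hcover, Finset.card_union_of_disjoint hdisj]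
  obtain ⟨f, g, hfinj, hginj, hfrng, hgrng, hfg⟩ :=
    exists_rank_functions (fun a b => T.Adj a b) C2.card C2 C1 rfl hsize
      (fun S T2 hS hT2 hSne => tree_edge_bound hT hdisj hproper S T2 hS hT2 hSne)
  set M := max lam q with hM
  have hmem1 : ∀ v : V, v ∉ C2 → v ∈ C1 := by
    intro v hv
    have := Finset.mem_univ v
    rw [← hcover, Finset.mem_union] at this
    tauto
  set K := max (lam + p) (Fintype.card V) with hK
  have hKbound : p + M ≤ K := by
    rcases le_total lam q with h | h
    · have : M = q := max_eq_right h
      rw [this]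
      exact le_trans (le_of_eq hn.symm) (le_max_right _ _)
    · have : M = lam := max_eq_left h
      rw [this]
      exact le_trans (le_of_eq (by ring)) (le_max_left _ _)
  have hqK : q ≤ K := le_trans (by omega : q ≤ Fintype.card V) (le_max_right _ _)
  refine ⟨fun v => if v ∈ C2 then f v else g v + M, ?_, ?_, ?_⟩
  · -- injective
    intro x y hxy
    beta_reduce at hxy
    by_cases hx : x ∈ C2 <;> by_cases hy : y ∈ C2
    · rw [if_pos hx, if_pos hy] at hxy
      exact hfinj hx hy hxy
    · exfalso
      rw [if_pos hx, if_neg hy] at hxy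
      have h1 := hfrng x hx
      have h2 := hgrng y (hmem1 y hy)
      rw [Finset.mem_Icc] at h1 h2
      have : lam ≤ M := le_max_left _ _
      have : q ≤ M := le_max_right _ _
      omega
    · exfalso
      rw [if_neg hx, if_pos hy] at hxy
      have h1 := hfrng y hy
      have h2 := hgrng x (hmem1 x hx)
      rw [Finset.mem_Icc] at h1 h2
      have : q ≤ M := le_max_right _ _
      omega
    · rw [if_neg hx, if_neg hy] at hxy
      exact hginj (hmem1 x hx) (hmem1 y hy) (by omega)
  · -- range
    intro v
    beta_reduce
    by_cases hv : v ∈ C2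
    · rw [if_pos hv]
      have := hfrng v hv
      rw [Finset.mem_Icc] at this ⊢
      omega
    · rw [if_neg hv]
      have := hgrng v (hmem1 v hv)
      rw [Finset.mem_Icc] at this ⊢
      omega
  · -- backbone condition
    intro u v hadj
    beta_reduce
    have hlM : lam ≤ M := le_max_left _ _
    rcases hproper u v hadj with ⟨hu1, hv2⟩ | ⟨hu2, hv1⟩
    · have hu2' : u ∉ C2 := Finset.disjoint_left.mp hdisj hu1
      rw [if_neg hu2', if_pos hv2]
      have h1 : f v ≤ g u := hfg v hv2 u hu1 hadj.symm
      have h2 : (lam : ℤ) ≤ (g u + M : ℕ) - (f v : ℕ) := by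
        push_cast
        omega
      exact le_trans h2 (le_abs_self _)
    · have hv2' : v ∉ C2 := Finset.disjoint_left.mp hdisj hv1
      rw [if_pos hu2, if_neg hv2']
      have h1 : f u ≤ g v := hfg u hu2 v hv1 hadj
      rw [abs_sub_comm]
      have h2 : (lam : ℤ) ≤ (g v + M : ℕ) - (f u : ℕ) := by
        push_cast
        omega
      exact le_trans h2 (le_abs_self _)
end

section
/- For every forest F on n vertices with a spanning complete graph K_n, max{n, λ + 1} ≤ BBC_λ(K_n, F) ≤ λ + n − 1, provided F has at least one edge. -/
/-- A λ-backbone coloring of the complete graph `K_n` with backbone `F`, using colors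
in `{1,...,k}`: an injective coloring respecting the backbone distance constraint. -/
def IsCliqueBackboneColoring {V : Type*} (F : SimpleGraph V) (lam k : ℕ) (c : V → ℕ) : Prop :=
  Function.Injective c ∧
  (∀ v, c v ∈ Finset.Icc 1 k) ∧
  (∀ u v, F.Adj u v → (lam : ℤ) ≤ |(c u : ℤ) - (c v : ℤ)|)

/-- `BBC_λ(K_n, F)` for a backbone `F` on the vertex set of `K_n`. -/
noncomputable def BBCclique {V : Type*} (F : SimpleGraph V) (lam : ℕ) : ℕ :=
  sInf {k | ∃ c : V → ℕ, IsCliqueBackboneColoring F lam k c}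

lemma acyclic_dist_ne {V : Type*} {F : SimpleGraph V} (hF : F.IsAcyclic) {r u v : V}
    (hur : F.Reachable u r) (huv : F.Adj u v) : F.dist u r ≠ F.dist v r := by
  classical
  have hvr : F.Reachable v r := huv.symm.reachable.trans hur
  obtain ⟨pu, hpu⟩ := hur.exists_walk_length_eq_dist
  obtain ⟨pv, hpv⟩ := hvr.exists_walk_length_eq_dist
  have hdu : pu.bypass.length = F.dist u r :=
    le_antisymm (hpu ▸ pu.length_bypass_le) (F.dist_le _)
  have hdv : pv.bypass.length = F.dist v r :=
    le_antisymm (hpv ▸ pv.length_bypass_le) (F.dist_le _)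
  intro h
  by_cases hu : u ∈ pv.bypass.support
  · have h1 : F.dist u r ≤ (pv.bypass.dropUntil u hu).length := F.dist_le _
    have h2 := congrArg SimpleGraph.Walk.length (pv.bypass.take_spec hu)
    rw [SimpleGraph.Walk.length_append] at h2
    have h3 : (pv.bypass.takeUntil u hu).length ≠ 0 := by
      intro h0
      exact huv.ne' (SimpleGraph.Walk.eq_of_length_eq_zero h0)
    omega
  · have hw : (SimpleGraph.Walk.cons huv pv.bypass).IsPath :=
      pv.bypass_isPath.cons hu
    have heq := hF.path_unique ⟨pu.bypass, pu.bypass_isPath⟩ ⟨_, hw⟩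
    have hlen := congrArg (fun p : F.Path u r => p.1.length) heq
    simp only [SimpleGraph.Walk.length_cons] at hlen
    omega

lemma acyclic_parity_ne {V : Type*} {F : SimpleGraph V} (hF : F.IsAcyclic) {r u v : V}
    (hur : F.Reachable u r) (huv : F.Adj u v) :
    F.dist u r % 2 ≠ F.dist v r % 2 := by
  have hvr : F.Reachable v r := huv.symm.reachable.trans hur
  obtain ⟨pu, hpu⟩ := hur.exists_walk_length_eq_dist
  obtain ⟨pv, hpv⟩ := hvr.exists_walk_length_eq_dist
  have h1 : F.dist u r ≤ F.dist v r + 1 := by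
    have := F.dist_le (SimpleGraph.Walk.cons huv pv)
    simpa [SimpleGraph.Walk.length_cons, hpv] using this
  have h2 : F.dist v r ≤ F.dist u r + 1 := by
    have := F.dist_le (SimpleGraph.Walk.cons huv.symm pu)
    simpa [SimpleGraph.Walk.length_cons, hpu] using this
  have h3 := acyclic_dist_ne hF hur huv
  omega

lemma exists_backbone_coloring {V : Type*} [Fintype V] (F : SimpleGraph V)
    (hF : F.IsAcyclic) (lam : ℕ) (hlam : 1 ≤ lam) :
    ∃ c : V → ℕ, IsCliqueBackboneColoring F lam (lam + Fintype.card V - 1) c := by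
  classical
  set n := Fintype.card V with hn
  let e : V ≃ Fin n := Fintype.equivFin V
  let root : V → V := fun v => (F.connectedComponentMk v).out
  have hreach : ∀ v, F.Reachable v (root v) := by
    intro v
    have h1 : F.connectedComponentMk (root v) = F.connectedComponentMk v :=
      (F.connectedComponentMk v).out_eq
    exact SimpleGraph.ConnectedComponent.eq.mp h1.symm
  let side : V → ℕ := fun v => F.dist v (root v) % 2
  have hside : ∀ u v, F.Adj u v → side u ≠ side v := by
    intro u v huv
    have hroot : root u = root v := by
      show (F.connectedComponentMk u).out = (F.connectedComponentMk v).out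
      rw [SimpleGraph.ConnectedComponent.connectedComponentMk_eq_of_adj huv]
    show F.dist u (root u) % 2 ≠ F.dist v (root v) % 2
    rw [← hroot]
    exact acyclic_parity_ne hF (hreach u) huv
  let A : Finset V := Finset.univ.filter (fun v => side v = 0)
  let B : Finset V := Finset.univ.filter (fun v => ¬ side v = 0)
  have hAB : A.card + B.card = n := by
    simpa using Finset.card_filter_add_card_filter_not
      (s := (Finset.univ : Finset V)) (p := fun v => side v = 0)
  let S : V → Finset V := fun v => Finset.univ.filter (fun w => side w = side v ∧ e w < e v)
  let rank : V → ℕ := fun v => (S v).card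
  have hrankA : ∀ v, side v = 0 → rank v < A.card := by
    intro v hv
    apply Finset.card_lt_card
    rw [Finset.ssubset_iff_of_subset]
    · exact ⟨v, by simp [A, hv], by simp [S]⟩
    · intro w hw
      simp only [S, Finset.mem_filter] at hw
      simp [A, hw.2.1, hv, ← hw.2.1]
  have hrankB : ∀ v, side v ≠ 0 → rank v < B.card := by
    intro v hv
    apply Finset.card_lt_card
    rw [Finset.ssubset_iff_of_subset]
    · exact ⟨v, by simp [B, hv], by simp [S]⟩
    · intro w hw
      simp only [S, Finset.mem_filter] at hw
      simp only [B, Finset.mem_filter, Finset.mem_univ, true_and]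
      rw [hw.2.1]; exact hv
  have hrank_inj : ∀ u v, side u = side v → rank u = rank v → u = v := by
    intro u v hs hr
    by_contra hne
    have hene : e u ≠ e v := fun h => hne (e.injective h)
    have key : ∀ a b : V, side a = side b → e a < e b → rank a < rank b := by
      intro a b hsab hlt
      apply Finset.card_lt_card
      rw [Finset.ssubset_iff_of_subset]
      · exact ⟨a, by simp [S, hsab, hlt], by simp [S]⟩
      · intro w hw
        simp only [S, Finset.mem_filter] at hw ⊢
        exact ⟨Finset.mem_univ w, hw.2.1.trans hsab, hw.2.2.trans hlt⟩
    rcases lt_or_gt_of_ne hene with h | h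
    · exact absurd hr (Nat.ne_of_lt (key u v hs h))
    · exact absurd hr.symm (Nat.ne_of_lt (key v u hs.symm h))
  have hside2 : ∀ v, side v ≤ 1 := by
    intro v
    show F.dist v (root v) % 2 ≤ 1
    omega
  let c : V → ℕ := fun v => if side v = 0 then rank v + 1 else lam + A.card + rank v
  have hcA : ∀ v, side v = 0 → c v = rank v + 1 := fun v hv => by simp [c, hv]
  have hcB : ∀ v, side v ≠ 0 → c v = lam + A.card + rank v := fun v hv => by simp [c, hv]
  have hAle : A.card ≤ n := by
    simpa using Finset.card_le_card (Finset.filter_subset _ (Finset.univ : Finset V))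
  refine ⟨c, ?_, ?_, ?_⟩
  · intro u v hc
    by_cases hu : side u = 0 <;> by_cases hv : side v = 0
    · rw [hcA u hu, hcA v hv] at hc
      exact hrank_inj u v (hu.trans hv.symm) (by omega)
    · rw [hcA u hu, hcB v hv] at hc
      have := hrankA u hu
      omega
    · rw [hcB u hu, hcA v hv] at hc
      have := hrankA v hv
      omega
    · rw [hcB u hu, hcB v hv] at hc
      have h1 := hside2 u
      have h2 := hside2 v
      refine hrank_inj u v ?_ (by omega)
      omega
  · intro v
    rw [Finset.mem_Icc]
    by_cases hv : side v = 0
    · rw [hcA v hv]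
      have := hrankA v hv
      omega
    · rw [hcB v hv]
      have := hrankB v hv
      omega
  · intro u v huv
    have hs := hside u v huv
    have key : ∀ a b : V, F.Adj a b → side a = 0 → side b ≠ 0 →
        (lam : ℤ) ≤ |(c a : ℤ) - (c b : ℤ)| := by
      intro a b _ ha hb
      have h1 := hrankA a ha
      rw [hcA a ha, hcB b hb]
      rw [abs_sub_comm]
      refine le_trans ?_ (le_abs_self _)
      push_cast
      omega
    by_cases hu : side u = 0
    · exact key u v huv hu (fun h => hs (hu.trans h.symm))
    · have hv : side v = 0 := by
        have h1 := hside2 u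
        have h2 := hside2 v
        omega
      rw [abs_sub_comm]
      exact key v u huv.symm hv hu

/-- For every forest `F` on `n` vertices with at least one edge,
`max {n, λ + 1} ≤ BBC_λ(K_n, F) ≤ λ + n − 1`. -/
theorem bbc_clique_forest_bounds {V : Type*} [Fintype V]
    (F : SimpleGraph V) (hF : F.IsAcyclic) (hedge : ∃ u v : V, F.Adj u v)
    (lam : ℕ) (hlam : 2 ≤ lam) :
    max (Fintype.card V) (lam + 1) ≤ BBCclique F lam ∧
      BBCclique F lam ≤ lam + Fintype.card V - 1 := by
  classical
  obtain ⟨c₀, hc₀⟩ := exists_backbone_coloring F hF lam (by omega)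
  have hne : {k | ∃ c : V → ℕ, IsCliqueBackboneColoring F lam k c}.Nonempty :=
    ⟨lam + Fintype.card V - 1, c₀, hc₀⟩
  constructor
  · have hmem := Nat.sInf_mem hne
    obtain ⟨c, hinj, hIcc, hdist⟩ := hmem
    unfold BBCclique
    set k := sInf {k | ∃ c : V → ℕ, IsCliqueBackboneColoring F lam k c} with hk
    have h1 : Fintype.card V ≤ k := by
      have := Finset.card_le_card_of_injOn (s := Finset.univ)
        (t := Finset.Icc 1 k) c (fun v _ => hIcc v) hinj.injOn
      simpa using this
    have h2 : lam + 1 ≤ k := by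
      obtain ⟨u, v, huv⟩ := hedge
      have hd := hdist u v huv
      have hu := Finset.mem_Icc.mp (hIcc u)
      have hv := Finset.mem_Icc.mp (hIcc v)
      rcases le_abs.mp hd with h | h
      · have : (lam : ℤ) + (c v : ℤ) ≤ (c u : ℤ) := by omega
        have hu2 := hu.2
        have hv1 := hv.1
        have hu1 : lam + c v ≤ c u := by exact_mod_cast this
        omega
      · have : (lam : ℤ) + (c u : ℤ) ≤ (c v : ℤ) := by omega
        have hv2 := hv.2
        have hu1 := hu.1
        have hv1 : lam + c u ≤ c v := by exact_mod_cast this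
        omega
    exact max_le h1 h2
  · exact Nat.sInf_le ⟨c₀, hc₀⟩
end

section
/- For the N-th Fibonacci tree T^F_N, the imbalance imb(T^F_N) equals F_N, the N-th Fibonacci number. -/
/-- Finite rooted trees: a node with a (possibly empty) list of subtrees. -/
inductive RTree where
  | node (children : List RTree)

/-- `RTree.cnt b t` counts the vertices of `t` in the color class of a proper
2-coloring: when `b = true` it counts the vertices at even depth (the class of the
root), when `b = false` those at odd depth. -/
def RTree.cnt (b : Bool) : RTree → ℕ
  | .node cs => (if b then 1 else 0) + (cs.attach.map (fun c => RTree.cnt (!b) c.1)).sum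
  decreasing_by
    simp only [RTree.node.sizeOf_spec]
    have := List.sizeOf_lt_of_mem c.2
    omega

/-- The `N`-th Fibonacci tree. -/
def fibTree : ℕ → RTree
  | 0 => .node []
  | 1 => .node []
  | 2 => .node []
  | (n + 3) => .node [.node [fibTree (n + 2), fibTree (n + 1)]]

lemma cnt_node2 (b : Bool) (t1 t2 : RTree) :
    (RTree.node [RTree.node [t1, t2]]).cnt b
      = (if b then 1 else 0) + ((if !b then 1 else 0) + (t1.cnt b + t2.cnt b)) := by
  simp [RTree.cnt, List.attach]

/-- `imb(T^F_N) = F_N`: in the proper 2-coloring of the `N`-th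
Fibonacci tree, the class containing the root exceeds the other class by exactly
the `N`-th Fibonacci number (in particular it is the larger class). -/
theorem fibTree_imbalance (N : ℕ) (hN : 1 ≤ N) :
    ((fibTree N).cnt true : ℤ) - ((fibTree N).cnt false : ℤ) = Nat.fib N := by
  induction N using Nat.strong_induction_on with
  | _ n ih =>
    match n, hN with
    | 1, _ => simp [fibTree, RTree.cnt]
    | 2, _ => simp [fibTree, RTree.cnt]
    | (m+3), _ =>
      have h1 := ih (m+2) (by omega) (by omega)
      have h2 := ih (m+1) (by omega) (by omega)
      have hf : Nat.fib (m+3) = Nat.fib (m+1) + Nat.fib (m+2) := Nat.fib_add_two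
      rw [show fibTree (m+3) = .node [.node [fibTree (m+2), fibTree (m+1)]] from rfl,
        cnt_node2, cnt_node2]
      push_cast
      rw [hf]
      push_cast
      norm_num
      linarith
end

section
/- For N ≥ 96, any k ∈ [0, F_{N/2 − 1}] and any l ∈ [1, N/48 − 1], there do not exist y ∈ [0, l] and coefficients z_j ∈ {−1, 0, 1} (j = 1,...,N) with Σ_{j=1}^N |z_j| ≤ 2l + 1 such that (F_N − k + l)/2 = y + Σ_{j=1}^N z_j F_j. -/
open Finset Real goldenRatio

private lemma psi_pow_eq (m : ℕ) :
    goldenConj ^ (m + 1) = (Nat.fib m : ℝ) + (Nat.fib (m + 1) : ℝ) * goldenConj := by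
  induction m with
  | zero => norm_num
  | succ n ih =>
    have h2 : Nat.fib (n + 2) = Nat.fib n + Nat.fib (n + 1) := Nat.fib_add_two
    rw [pow_succ, ih, h2]
    push_cast
    linear_combination (Nat.fib (n + 1) : ℝ) * goldenConj_sq

private lemma fib_le_gold_pow : ∀ n : ℕ, (Nat.fib (n + 1) : ℝ) ≤ goldenRatio ^ n := by
  have key : ∀ n : ℕ, (Nat.fib (n + 1) : ℝ) ≤ goldenRatio ^ n ∧
      (Nat.fib (n + 2) : ℝ) ≤ goldenRatio ^ (n + 1) := by
    intro n
    induction n with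
    | zero =>
      constructor
      · norm_num
      · norm_num [Nat.fib]
        linarith [one_lt_goldenRatio]
    | succ n ih =>
      refine ⟨ih.2, ?_⟩
      have h2 : Nat.fib (n + 3) = Nat.fib (n + 1) + Nat.fib (n + 2) := Nat.fib_add_two
      have hpow : goldenRatio ^ (n + 2) = goldenRatio ^ n + goldenRatio ^ (n + 1) := by
        have := goldenRatio_sq
        have h : goldenRatio ^ (n + 2) = goldenRatio ^ n * goldenRatio ^ 2 := by ring
        rw [h, this]; ring
      rw [show n + 1 + 2 = n + 3 from rfl, h2, show n + 1 + 1 = n + 2 from rfl, hpow]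
      push_cast
      linarith [ih.1, ih.2]
  exact fun n => (key n).1

private lemma sum_fib_le : ∀ g : ℕ, (∑ j ∈ Finset.Icc 1 g, Nat.fib j) ≤ Nat.fib (g + 2) := by
  intro g
  induction g with
  | zero => simp
  | succ n ih =>
    rw [Finset.sum_Icc_succ_top (by omega)]
    have h2 : Nat.fib (n + 3) = Nat.fib (n + 1) + Nat.fib (n + 2) := Nat.fib_add_two
    have := Nat.fib_mono (show n + 1 ≤ n + 2 by omega)
    have hr : Nat.fib (n + 1 + 2) = Nat.fib (n + 3) := rfl
    omega

private lemma lin_le_fib : ∀ b : ℕ, 2 * (b + 8) + 1 ≤ Nat.fib (b + 8) := by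
  intro b
  induction b with
  | zero => decide
  | succ n ih =>
    have h2 : Nat.fib (n + 9) = Nat.fib (n + 7) + Nat.fib (n + 8) := Nat.fib_add_two
    have h3 : Nat.fib 7 ≤ Nat.fib (n + 7) := Nat.fib_mono (by omega)
    have h4 : Nat.fib 7 = 13 := by decide
    have hr : Nat.fib (n + 1 + 8) = Nat.fib (n + 9) := rfl
    omega


set_option maxHeartbeats 1000000

/-- For `N ≥ 96`, any `k ∈ [0, F_{N/2 − 1}]` and any
`l ∈ [1, N/48 − 1]`, there do not exist `y ∈ [0, l]` and coefficients
`z_j ∈ {−1, 0, 1}` (`j = 1,…,N`) with `Σ |z_j| ≤ 2l + 1` such that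
`(F_N − k + l)/2 = y + Σ_{j=1}^N z_j F_j` (stated multiplied through by 2;
`F_N − k + l` is assumed even). -/
theorem no_short_fib_representation (N k l : ℕ) (hN : 96 ≤ N)
    (hk : k ≤ Nat.fib (N / 2 - 1)) (hl1 : 1 ≤ l) (hl2 : 48 * (l + 1) ≤ N)
    (heven : Even (Nat.fib N + l - k)) :
    ¬ ∃ (y : ℕ) (z : ℕ → ℤ),
        y ≤ l ∧
        (∀ j, z j = -1 ∨ z j = 0 ∨ z j = 1) ∧
        (∑ j ∈ Finset.Icc 1 N, (z j).natAbs) ≤ 2 * l + 1 ∧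
        (Nat.fib N : ℤ) - k + l = 2 * ((y : ℤ) + ∑ j ∈ Finset.Icc 1 N, z j * Nat.fib j) := by
  rintro ⟨y, z, hy, hz, hcard, heq⟩
  have habs : ∀ j, (z j).natAbs ≤ 1 := by
    intro j; rcases hz j with h | h | h <;> simp [h]
  -- find a gap of length 12 in the support of z, inside (N/2, N]
  obtain ⟨i, hi, hgap⟩ :
      ∃ i, i ≤ 2 * l + 1 ∧ ∀ j, N / 2 + 12 * i < j → j ≤ N / 2 + 12 * i + 12 → z j = 0 := by
    by_contra hcon
    push_neg at hcon
    have hcon' : ∀ i : ℕ, ∃ j, i ≤ 2 * l + 1 →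
        (N / 2 + 12 * i < j ∧ j ≤ N / 2 + 12 * i + 12 ∧ z j ≠ 0) := by
      intro i
      by_cases h : i ≤ 2 * l + 1
      · obtain ⟨j, hj1, hj2, hj3⟩ := hcon i h
        exact ⟨j, fun _ => ⟨hj1, hj2, hj3⟩⟩
      · exact ⟨0, fun hh => absurd hh h⟩
    choose f hf using hcon'
    set D : Finset ℕ := (Finset.Icc 1 N).filter (fun j => z j ≠ 0) with hD
    have hDcard : D.card ≤ 2 * l + 1 := by
      have h1 : D.card = ∑ j ∈ D, 1 := by simp
      have h2 : ∑ j ∈ D, 1 ≤ ∑ j ∈ D, (z j).natAbs :=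
        Finset.sum_le_sum (fun j hj => Int.natAbs_pos.mpr (Finset.mem_filter.mp hj).2)
      have h3 : ∑ j ∈ D, (z j).natAbs ≤ ∑ j ∈ Finset.Icc 1 N, (z j).natAbs :=
        Finset.sum_le_sum_of_subset (Finset.filter_subset _ _)
      omega
    have hmaps : ∀ a ∈ Finset.range (2 * l + 2), f a ∈ D := by
      intro a ha
      simp only [Finset.mem_range] at ha
      obtain ⟨h1, h2, h3⟩ := hf a (by omega)
      rw [hD, Finset.mem_filter, Finset.mem_Icc]
      refine ⟨⟨by omega, by omega⟩, h3⟩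
    have hinj : Set.InjOn f (Finset.range (2 * l + 2)) := by
      intro a ha b hb hab
      simp only [Finset.coe_range, Set.mem_Iio] at ha hb
      obtain ⟨ha1, ha2, -⟩ := hf a (by omega)
      obtain ⟨hb1, hb2, -⟩ := hf b (by omega)
      omega
    have := Finset.card_le_card_of_injOn f hmaps hinj
    rw [Finset.card_range] at this
    omega
  set g : ℕ := N / 2 + 12 * i with hg
  have hg48 : 48 ≤ g := by omega
  have hgN : g + 12 ≤ N := by omega
  -- sums
  set Slo : ℤ := ∑ j ∈ Finset.Icc 1 g, z j * (Nat.fib j : ℤ) with hSlo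
  set Shi : ℤ := ∑ j ∈ Finset.Ioc (g + 12) N, z j * (Nat.fib j : ℤ) with hShi
  set Sp : ℤ := ∑ j ∈ Finset.Ioc (g + 12) N, z j * (Nat.fib (j - 1) : ℤ) with hSp
  have hIccIoc : ∀ m : ℕ, Finset.Icc 1 m = Finset.Ioc 0 m := by
    intro m; ext x; simp [Nat.lt_iff_add_one_le]
  have hsplit : ∑ j ∈ Finset.Icc 1 N, z j * (Nat.fib j : ℤ) = Slo + Shi := by
    have e1 : (∑ j ∈ Finset.Ioc 0 g, z j * (Nat.fib j : ℤ))
        + ∑ j ∈ Finset.Ioc g N, z j * (Nat.fib j : ℤ)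
        = ∑ j ∈ Finset.Ioc 0 N, z j * (Nat.fib j : ℤ) :=
      Finset.sum_Ioc_consecutive _ (by omega) (by omega)
    have e2 : (∑ j ∈ Finset.Ioc g (g + 12), z j * (Nat.fib j : ℤ))
        + ∑ j ∈ Finset.Ioc (g + 12) N, z j * (Nat.fib j : ℤ)
        = ∑ j ∈ Finset.Ioc g N, z j * (Nat.fib j : ℤ) :=
      Finset.sum_Ioc_consecutive _ (by omega) (by omega)
    have e3 : (∑ j ∈ Finset.Ioc g (g + 12), z j * (Nat.fib j : ℤ)) = 0 := by
      refine Finset.sum_eq_zero ?_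
      intro j hj
      rw [Finset.mem_Ioc] at hj
      rw [hgap j (by omega) (by omega)]
      ring
    rw [hSlo, hShi, hIccIoc N, hIccIoc g, ← e1, ← e2, e3]
    ring
  set q : ℤ := 2 * Shi - (Nat.fib N : ℤ) with hq
  set p : ℤ := 2 * Sp - (Nat.fib (N - 1) : ℤ) with hp
  have hqval : q = (l : ℤ) - k - 2 * y - 2 * Slo := by
    rw [hq]
    rw [hsplit] at heq
    linarith [heq]
  -- upper bound for |q|
  have hSlo_bound : |Slo| ≤ (Nat.fib (g + 2) : ℤ) := by
    calc |Slo| ≤ ∑ j ∈ Finset.Icc 1 g, |z j * (Nat.fib j : ℤ)| := Finset.abs_sum_le_sum_abs _ _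
    _ ≤ ∑ j ∈ Finset.Icc 1 g, (Nat.fib j : ℤ) := by
        refine Finset.sum_le_sum ?_
        intro j hj
        rw [abs_mul]
        have h1 : |z j| ≤ 1 := by
          rcases hz j with h | h | h <;> simp [h]
        have h2 : |(Nat.fib j : ℤ)| = (Nat.fib j : ℤ) := abs_of_nonneg (by positivity)
        nlinarith [abs_nonneg (z j), abs_nonneg ((Nat.fib j : ℤ))]
    _ ≤ (Nat.fib (g + 2) : ℤ) := by
        rw [← Nat.cast_sum]
        exact_mod_cast sum_fib_le g
  have hkg : (k : ℤ) ≤ (Nat.fib g : ℤ) := by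
    have : Nat.fib (N / 2 - 1) ≤ Nat.fib g := Nat.fib_mono (by omega)
    exact_mod_cast le_trans hk this
  have hNg : (N : ℤ) ≤ (Nat.fib g : ℤ) := by
    have h1 := lin_le_fib (g - 8)
    rw [Nat.sub_add_cancel (by omega)] at h1
    have : N ≤ Nat.fib g := by omega
    exact_mod_cast this
  have hfibchain : 2 * Nat.fib g + 2 * Nat.fib (g + 2) ≤ Nat.fib (g + 5) := by
    have c1 : Nat.fib g ≤ Nat.fib (g + 1) := Nat.fib_mono (by omega)
    have c2 : Nat.fib (g + 3) = Nat.fib (g + 1) + Nat.fib (g + 2) := Nat.fib_add_two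
    have c3 : Nat.fib (g + 5) = Nat.fib (g + 3) + Nat.fib (g + 4) := Nat.fib_add_two
    have c4 : Nat.fib (g + 3) ≤ Nat.fib (g + 4) := Nat.fib_mono (by omega)
    omega
  have hq_bound : |q| ≤ (Nat.fib (g + 5) : ℤ) := by
    have h3l : 3 * (l : ℤ) ≤ (N : ℤ) := by exact_mod_cast (show 3 * l ≤ N by omega)
    have hyl : (y : ℤ) ≤ (l : ℤ) := by exact_mod_cast hy
    have hSb := abs_le.mp hSlo_bound
    have hcast : (2 : ℤ) * (Nat.fib g : ℤ) + 2 * (Nat.fib (g + 2) : ℤ) ≤ (Nat.fib (g + 5) : ℤ) := by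
      exact_mod_cast hfibchain
    rw [hqval]
    rw [abs_le]
    constructor
    · linarith [hSb.1, hSb.2, hkg, hNg, h3l, hyl, hcast, (show (0:ℤ) ≤ k by positivity),
        (show (0:ℤ) ≤ y by positivity), (show (0:ℤ) ≤ l by positivity)]
    · linarith [hSb.1, hSb.2, hkg, hNg, h3l, hyl, hcast, (show (0:ℤ) ≤ k by positivity),
        (show (0:ℤ) ≤ y by positivity), (show (0:ℤ) ≤ l by positivity)]
  -- parity
  have hcop : Nat.Coprime (Nat.fib (N - 1)) (Nat.fib N) := by
    have := Nat.fib_coprime_fib_succ (N - 1)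
    rwa [Nat.sub_add_cancel (by omega)] at this
  have hnotboth : ¬ (Even p ∧ Even q) := by
    rintro ⟨⟨a, ha⟩, ⟨b, hb⟩⟩
    have d1 : Even (Nat.fib (N - 1)) := by
      have : ((Nat.fib (N - 1) : ℤ)) = 2 * Sp - p := by rw [hp]; ring
      have he : Even ((Nat.fib (N - 1) : ℤ)) := ⟨Sp - a, by rw [this, ha]; ring⟩
      exact_mod_cast he
    have d2 : Even (Nat.fib N) := by
      have : ((Nat.fib N : ℤ)) = 2 * Shi - q := by rw [hq]; ring
      have he : Even ((Nat.fib N : ℤ)) := ⟨Shi - b, by rw [this, hb]; ring⟩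
      exact_mod_cast he
    have := Nat.dvd_gcd d1.two_dvd d2.two_dvd
    rw [Nat.Coprime] at hcop
    rw [hcop] at this
    omega
  have hodd : Odd (p ^ 2 + p * q - q ^ 2) := by
    rcases Int.even_or_odd p with hp1 | hp1 <;> rcases Int.even_or_odd q with hq1 | hq1
    · exact absurd ⟨hp1, hq1⟩ hnotboth
    · obtain ⟨a, ha⟩ := hp1; obtain ⟨b, hb⟩ := hq1
      exact ⟨2 * a ^ 2 + 2 * a * b + a - 2 * b ^ 2 - 2 * b - 1, by rw [ha, hb]; ring⟩
    · obtain ⟨a, ha⟩ := hp1; obtain ⟨b, hb⟩ := hq1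
      exact ⟨2 * a ^ 2 + 2 * a + 2 * a * b + b - 2 * b ^ 2, by rw [ha, hb]; ring⟩
    · obtain ⟨a, ha⟩ := hp1; obtain ⟨b, hb⟩ := hq1
      exact ⟨2 * a ^ 2 + 3 * a + 2 * a * b - b - 2 * b ^ 2, by rw [ha, hb]; ring⟩
  -- real part
  set ξ : ℝ := (p : ℝ) + (q : ℝ) * goldenRatio with hxi
  set η : ℝ := (p : ℝ) + (q : ℝ) * goldenConj with heta
  have hnorm : ((p ^ 2 + p * q - q ^ 2 : ℤ) : ℝ) = ξ * η := by
    rw [hxi, heta]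
    push_cast
    linear_combination (-((p : ℝ) * q)) * goldenRatio_add_goldenConj + (-((q : ℝ) ^ 2)) * goldenRatio_mul_goldenConj
  have hxieta : (1 : ℝ) ≤ |ξ| * |η| := by
    have h0 : p ^ 2 + p * q - q ^ 2 ≠ 0 := by
      rcases hodd with ⟨m, hm⟩; omega
    have h1 : (1 : ℤ) ≤ |p ^ 2 + p * q - q ^ 2| := Int.one_le_abs h0
    have h2 : (1 : ℝ) ≤ |((p ^ 2 + p * q - q ^ 2 : ℤ) : ℝ)| := by exact_mod_cast h1
    rwa [hnorm, abs_mul] at h2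
  -- η as a ψ-power sum
  have hη : η = 2 * (∑ j ∈ Finset.Ioc (g + 12) N, (z j : ℝ) * goldenConj ^ j)
      - goldenConj ^ N := by
    have hterm : ∀ j ∈ Finset.Ioc (g + 12) N, (z j : ℝ) * goldenConj ^ j
        = (z j : ℝ) * (Nat.fib (j - 1) : ℝ) + ((z j : ℝ) * (Nat.fib j : ℝ)) * goldenConj := by
      intro j hj
      rw [Finset.mem_Ioc] at hj
      have h1 := psi_pow_eq (j - 1)
      rw [Nat.sub_add_cancel (by omega : 1 ≤ j)] at h1
      rw [h1]; ring
    rw [Finset.sum_congr rfl hterm, Finset.sum_add_distrib, ← Finset.sum_mul]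
    have hN1 := psi_pow_eq (N - 1)
    rw [Nat.sub_add_cancel (by omega : 1 ≤ N)] at hN1
    rw [hN1, heta, hp, hq, hSp, hShi]
    push_cast
    ring
  -- facts about φ and r := φ⁻¹
  have hr0 : (0:ℝ) < goldenRatio⁻¹ := inv_pos.mpr goldenRatio_pos
  have hr1 : goldenRatio⁻¹ < 1 := inv_lt_one_of_one_lt₀ one_lt_goldenRatio
  have hpsi_abs : |goldenConj| = goldenRatio⁻¹ := by
    rw [abs_of_neg goldenConj_neg, ← inv_goldenRatio]
  have hinvg : goldenRatio⁻¹ = goldenRatio - 1 := by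
    rw [inv_goldenRatio]
    linarith [goldenRatio_add_goldenConj]
  have hφr : goldenRatio + 1 = goldenRatio⁻¹ + 2 := by
    rw [hinvg]; ring
  have hr2 : goldenRatio⁻¹ ^ 2 = 1 - goldenRatio⁻¹ := by
    rw [hinvg]
    linear_combination goldenRatio_sq
  -- geometric bound
  have hgeo : ∑ j ∈ Finset.Ioc (g + 12) N, (goldenRatio⁻¹) ^ j
      ≤ (goldenRatio⁻¹) ^ (g + 13) * (goldenRatio + 1) := by
    have hIocIco : Finset.Ioc (g + 12) N = Finset.Ico (g + 13) (N + 1) := by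
      ext x; simp only [Finset.mem_Ioc, Finset.mem_Ico]; omega
    rw [hIocIco, geom_sum_Ico (by linarith : (goldenRatio⁻¹ : ℝ) ≠ 1) (by omega)]
    rw [div_le_iff_of_neg (by linarith : goldenRatio⁻¹ - 1 < 0)]
    have hprod : (goldenRatio + 1) * (goldenRatio⁻¹ - 1) = -1 := by
      rw [hφr]
      linear_combination hr2
    have hkey : (goldenRatio⁻¹) ^ (g + 13) * (goldenRatio + 1) * (goldenRatio⁻¹ - 1)
        = -((goldenRatio⁻¹) ^ (g + 13)) := by
      calc (goldenRatio⁻¹) ^ (g + 13) * (goldenRatio + 1) * (goldenRatio⁻¹ - 1)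
          = (goldenRatio⁻¹) ^ (g + 13) * ((goldenRatio + 1) * (goldenRatio⁻¹ - 1)) := by ring
        _ = -((goldenRatio⁻¹) ^ (g + 13)) := by rw [hprod]; ring
    rw [hkey]
    have := pow_pos hr0 (N + 1)
    linarith
  -- bound on |η|
  have hηb : |η| ≤ (goldenRatio ^ (g + 9))⁻¹ := by
    have h1 : |∑ j ∈ Finset.Ioc (g + 12) N, (z j : ℝ) * goldenConj ^ j|
        ≤ ∑ j ∈ Finset.Ioc (g + 12) N, (goldenRatio⁻¹) ^ j := by
      calc |∑ j ∈ Finset.Ioc (g + 12) N, (z j : ℝ) * goldenConj ^ j|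
          ≤ ∑ j ∈ Finset.Ioc (g + 12) N, |(z j : ℝ) * goldenConj ^ j| :=
            Finset.abs_sum_le_sum_abs _ _
        _ ≤ ∑ j ∈ Finset.Ioc (g + 12) N, (goldenRatio⁻¹) ^ j := by
            refine Finset.sum_le_sum ?_
            intro j hj
            rw [abs_mul, abs_pow, hpsi_abs]
            have hz1 : |(z j : ℝ)| ≤ 1 := by
              rcases hz j with h | h | h <;> simp [h]
            have := pow_pos hr0 j
            nlinarith [abs_nonneg ((z j : ℝ))]
    have h2 : |goldenConj ^ N| = (goldenRatio⁻¹) ^ N := by rw [abs_pow, hpsi_abs]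
    have h3 : (goldenRatio⁻¹) ^ N ≤ (goldenRatio⁻¹) ^ (g + 12) :=
      pow_le_pow_of_le_one hr0.le hr1.le (by omega)
    have hE : 2 * ((goldenRatio⁻¹) ^ (g + 13) * (goldenRatio + 1)) + (goldenRatio⁻¹) ^ (g + 12)
        = (goldenRatio ^ (g + 9))⁻¹ := by
      rw [← inv_pow, hφr]
      linear_combination ((goldenRatio⁻¹) ^ (g + 9)
        * (2 * goldenRatio⁻¹ ^ 3 + 2 * goldenRatio⁻¹ ^ 2 + goldenRatio⁻¹ + 1)) * hr2
    calc |η| ≤ 2 * |∑ j ∈ Finset.Ioc (g + 12) N, (z j : ℝ) * goldenConj ^ j|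
        + |goldenConj ^ N| := by
          rw [hη]
          calc |2 * (∑ j ∈ Finset.Ioc (g + 12) N, (z j : ℝ) * goldenConj ^ j) - goldenConj ^ N|
              ≤ |2 * (∑ j ∈ Finset.Ioc (g + 12) N, (z j : ℝ) * goldenConj ^ j)|
                + |goldenConj ^ N| := abs_sub _ _
            _ = 2 * |∑ j ∈ Finset.Ioc (g + 12) N, (z j : ℝ) * goldenConj ^ j|
                + |goldenConj ^ N| := by rw [abs_mul]; norm_num
      _ ≤ 2 * ((goldenRatio⁻¹) ^ (g + 13) * (goldenRatio + 1)) + (goldenRatio⁻¹) ^ (g + 12) := by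
          rw [h2]
          have := hgeo
          linarith [h1, h3]
      _ = (goldenRatio ^ (g + 9))⁻¹ := hE
  -- lower bound on |ξ|
  have hP : (0:ℝ) < goldenRatio ^ (g + 9) := pow_pos goldenRatio_pos _
  have hxige : goldenRatio ^ (g + 9) ≤ |ξ| := by
    have h2 : goldenRatio ^ (g + 9) * |η| ≤ 1 := by
      calc goldenRatio ^ (g + 9) * |η| ≤ goldenRatio ^ (g + 9) * (goldenRatio ^ (g + 9))⁻¹ :=
            mul_le_mul_of_nonneg_left hηb hP.le
        _ = 1 := mul_inv_cancel₀ (ne_of_gt hP)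
    calc goldenRatio ^ (g + 9) = goldenRatio ^ (g + 9) * 1 := by ring
      _ ≤ goldenRatio ^ (g + 9) * (|ξ| * |η|) := by
          exact mul_le_mul_of_nonneg_left hxieta hP.le
      _ = |ξ| * (goldenRatio ^ (g + 9) * |η|) := by ring
      _ ≤ |ξ| * 1 := mul_le_mul_of_nonneg_left h2 (abs_nonneg ξ)
      _ = |ξ| := by ring
  -- upper bound on |ξ|
  have hdiff : ξ - η = (q : ℝ) * Real.sqrt 5 := by
    rw [hxi, heta]
    linear_combination (q : ℝ) * goldenRatio_sub_goldenConj
  have hq_real : |(q : ℝ)| ≤ (Nat.fib (g + 5) : ℝ) := by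
    rw [← Int.cast_abs]
    exact_mod_cast hq_bound
  have hsqrt5 : Real.sqrt 5 ≤ goldenRatio + 1 := by
    have h1 : Real.sqrt 5 = goldenRatio - goldenConj := goldenRatio_sub_goldenConj.symm
    linarith [neg_one_lt_goldenConj]
  have hfib_gold : (Nat.fib (g + 5) : ℝ) ≤ goldenRatio ^ (g + 4) := fib_le_gold_pow (g + 4)
  have hup : |ξ| ≤ goldenRatio ^ (g + 6) + 1 := by
    have h1 : |ξ| ≤ |ξ - η| + |η| := by
      have := abs_add_le (ξ - η) η
      simpa using this
    have h2 : |ξ - η| = |(q : ℝ)| * Real.sqrt 5 := by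
      rw [hdiff, abs_mul, abs_of_nonneg (Real.sqrt_nonneg 5)]
    have h3 : (goldenRatio ^ (g + 9))⁻¹ ≤ 1 := by
      rw [inv_le_one_iff₀]
      right
      exact one_le_pow₀ one_lt_goldenRatio.le
    have h4 : |(q : ℝ)| * Real.sqrt 5 ≤ goldenRatio ^ (g + 4) * (goldenRatio + 1) := by
      have := Real.sqrt_nonneg 5
      have := abs_nonneg ((q : ℝ))
      nlinarith [hq_real, hsqrt5, hfib_gold]
    have h5 : goldenRatio ^ (g + 4) * (goldenRatio + 1) = goldenRatio ^ (g + 6) := by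
      rw [← goldenRatio_sq]
      ring
    linarith [hηb]
  -- final contradiction
  have h32 : (3:ℝ)/2 ≤ goldenRatio := by
    have h5 : (2:ℝ) ≤ Real.sqrt 5 := by
      nlinarith [Real.sq_sqrt (show (0:ℝ) ≤ 5 by norm_num), Real.sqrt_nonneg 5]
    show (3:ℝ)/2 ≤ (1 + Real.sqrt 5) / 2
    linarith
  have hA : (1:ℝ) ≤ goldenRatio ^ (g + 6) := one_le_pow₀ one_lt_goldenRatio.le
  have hcube : (27:ℝ)/8 ≤ goldenRatio ^ 3 := by
    have h := pow_le_pow_left₀ (by norm_num : (0:ℝ) ≤ 3/2) h32 3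
    norm_num at h
    linarith
  have hsplitpow : goldenRatio ^ (g + 9) = goldenRatio ^ (g + 6) * goldenRatio ^ 3 := by ring
  have hprod2 : goldenRatio ^ (g + 6) * (27/8 : ℝ) ≤ goldenRatio ^ (g + 6) * goldenRatio ^ 3 :=
    mul_le_mul_of_nonneg_left hcube (pow_nonneg goldenRatio_pos.le _)
  have hfin : goldenRatio ^ (g + 6) * goldenRatio ^ 3 ≤ goldenRatio ^ (g + 6) + 1 := by
    rw [← hsplitpow]
    linarith [hxige, hup]
  linarith [hfin, hprod2, hA]
end
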